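/- arXiv:2112.04183 — 5 statements merged into one kernel-verified Lean document; each statement's English description precedes it below -/
import Mathlib

section
/- In any directed co-graph with at least two vertices, there exist two distinct vertices x and y that are directed twins, i.e., N⁻(x)\{y} = N⁻(y)\{x} and N⁺(x)\{y} = N⁺(y)\{x}. -/
/-- Arc relation of the induced subdigraph on a vertex set `S`. -/
def restrict (A : ℕ → ℕ → Prop) (S : Finset ℕ) : ℕ → ℕ → Prop :=
  fun x y => A x y ∧ x ∈ S ∧ y ∈ S

/-- `walkLen A n u v`: there is a directed walk of length `n` from `u` to `v`. -/
def walkLen (A : ℕ → ℕ → Prop) : ℕ → ℕ → ℕ → Prop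
  | 0, u, v => u = v
  | n + 1, u, v => ∃ w, A u w ∧ walkLen A n w v

/-- `v` is reachable from `u` by a directed walk. -/
def Reach (A : ℕ → ℕ → Prop) (u v : ℕ) : Prop :=
  ∃ n, walkLen A n u v

/-- Directed distance: length of a shortest directed walk (= shortest directed path). -/
noncomputable def ddist (A : ℕ → ℕ → Prop) (u v : ℕ) : ℕ :=
  sInf {n | walkLen A n u v}

/-- `x` and `y` are directed twins: `N⁻(x)\{y} = N⁻(y)\{x}` and `N⁺(x)\{y} = N⁺(y)\{x}`. -/
def DTwins (A : ℕ → ℕ → Prop) (x y : ℕ) : Prop :=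
  x ≠ y ∧
    {w | A w x} \ {y} = {w | A w y} \ {x} ∧
    {w | A x w} \ {y} = {w | A y w} \ {x}

/-- The arc relation obtained by adding a new vertex `u` as a directed twin of `v`;
`auv`, `avu` determine which of the arcs `(u,v)`, `(v,u)` are present (any of the
four adjacency patterns between the twins). -/
def twinArc (A : ℕ → ℕ → Prop) (v u : ℕ) (auv avu : Prop) : ℕ → ℕ → Prop :=
  fun x y => A x y ∨ (x = u ∧ y = v ∧ auv) ∨ (x = v ∧ y = u ∧ avu) ∨
    (x = u ∧ A v y) ∨ (y = u ∧ A x v)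

/-- Directed co-graphs: single vertices, disjoint union, series and order composition. -/
inductive DCo : Finset ℕ → (ℕ → ℕ → Prop) → Prop
  | single (v : ℕ) : DCo {v} (fun _ _ => False)
  | union {V₁ V₂ : Finset ℕ} {A₁ A₂ : ℕ → ℕ → Prop} :
      Disjoint V₁ V₂ → DCo V₁ A₁ → DCo V₂ A₂ →
      DCo (V₁ ∪ V₂) (fun x y => A₁ x y ∨ A₂ x y)
  | series {V₁ V₂ : Finset ℕ} {A₁ A₂ : ℕ → ℕ → Prop} :
      Disjoint V₁ V₂ → DCo V₁ A₁ → DCo V₂ A₂ →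
      DCo (V₁ ∪ V₂)
        (fun x y => A₁ x y ∨ A₂ x y ∨ (x ∈ V₁ ∧ y ∈ V₂) ∨ (x ∈ V₂ ∧ y ∈ V₁))
  | order {V₁ V₂ : Finset ℕ} {A₁ A₂ : ℕ → ℕ → Prop} :
      Disjoint V₁ V₂ → DCo V₁ A₁ → DCo V₂ A₂ →
      DCo (V₁ ∪ V₂) (fun x y => A₁ x y ∨ A₂ x y ∨ (x ∈ V₁ ∧ y ∈ V₂))

/-- Extended directed co-graphs: additionally closed under directed union. -/
inductive ExtDCo : Finset ℕ → (ℕ → ℕ → Prop) → Prop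
  | single (v : ℕ) : ExtDCo {v} (fun _ _ => False)
  | union {V₁ V₂ : Finset ℕ} {A₁ A₂ : ℕ → ℕ → Prop} :
      Disjoint V₁ V₂ → ExtDCo V₁ A₁ → ExtDCo V₂ A₂ →
      ExtDCo (V₁ ∪ V₂) (fun x y => A₁ x y ∨ A₂ x y)
  | series {V₁ V₂ : Finset ℕ} {A₁ A₂ : ℕ → ℕ → Prop} :
      Disjoint V₁ V₂ → ExtDCo V₁ A₁ → ExtDCo V₂ A₂ →
      ExtDCo (V₁ ∪ V₂)
        (fun x y => A₁ x y ∨ A₂ x y ∨ (x ∈ V₁ ∧ y ∈ V₂) ∨ (x ∈ V₂ ∧ y ∈ V₁))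
  | order {V₁ V₂ : Finset ℕ} {A₁ A₂ : ℕ → ℕ → Prop} :
      Disjoint V₁ V₂ → ExtDCo V₁ A₁ → ExtDCo V₂ A₂ →
      ExtDCo (V₁ ∪ V₂) (fun x y => A₁ x y ∨ A₂ x y ∨ (x ∈ V₁ ∧ y ∈ V₂))
  | dUnion {V₁ V₂ : Finset ℕ} {A₁ A₂ : ℕ → ℕ → Prop} (R : ℕ → ℕ → Prop) :
      Disjoint V₁ V₂ → ExtDCo V₁ A₁ → ExtDCo V₂ A₂ →
      ExtDCo (V₁ ∪ V₂) (fun x y => A₁ x y ∨ A₂ x y ∨ (x ∈ V₁ ∧ y ∈ V₂ ∧ R x y))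

/-- Digraphs constructible from single vertices by disjoint union and adding directed twins. -/
inductive TwinBuilt : Finset ℕ → (ℕ → ℕ → Prop) → Prop
  | single (v : ℕ) : TwinBuilt {v} (fun _ _ => False)
  | union {V₁ V₂ : Finset ℕ} {A₁ A₂ : ℕ → ℕ → Prop} :
      Disjoint V₁ V₂ → TwinBuilt V₁ A₁ → TwinBuilt V₂ A₂ →
      TwinBuilt (V₁ ∪ V₂) (fun x y => A₁ x y ∨ A₂ x y)
  | twin {V : Finset ℕ} {A : ℕ → ℕ → Prop} (v u : ℕ) (auv avu : Prop) :
      v ∈ V → u ∉ V → TwinBuilt V A →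
      TwinBuilt (insert u V) (twinArc A v u auv avu)

/-- Twin-distance-hereditary digraphs: built from a single vertex by disjoint union,
adding directed twins, and adding pendant plus / pendant minus vertices. -/
inductive TwinDH : Finset ℕ → (ℕ → ℕ → Prop) → Prop
  | single (v : ℕ) : TwinDH {v} (fun _ _ => False)
  | union {V₁ V₂ : Finset ℕ} {A₁ A₂ : ℕ → ℕ → Prop} :
      Disjoint V₁ V₂ → TwinDH V₁ A₁ → TwinDH V₂ A₂ →
      TwinDH (V₁ ∪ V₂) (fun x y => A₁ x y ∨ A₂ x y)
  | twin {V : Finset ℕ} {A : ℕ → ℕ → Prop} (v u : ℕ) (auv avu : Prop) :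
      v ∈ V → u ∉ V → TwinDH V A →
      TwinDH (insert u V) (twinArc A v u auv avu)
  | pendPlus {V : Finset ℕ} {A : ℕ → ℕ → Prop} (a u : ℕ) :
      a ∈ V → u ∉ V → TwinDH V A →
      TwinDH (insert u V) (fun x y => A x y ∨ (x = u ∧ y = a))
  | pendMinus {V : Finset ℕ} {A : ℕ → ℕ → Prop} (a u : ℕ) :
      a ∈ V → u ∉ V → TwinDH V A →
      TwinDH (insert u V) (fun x y => A x y ∨ (x = a ∧ y = u))

/-- Undirected distance-hereditary graphs, via the recursive characterization:
built from a single vertex by pendant vertices, false twins and true twins. -/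
inductive UDH : Finset ℕ → (ℕ → ℕ → Prop) → Prop
  | single (v : ℕ) : UDH {v} (fun _ _ => False)
  | pendant {V : Finset ℕ} {E : ℕ → ℕ → Prop} (a u : ℕ) :
      a ∈ V → u ∉ V → UDH V E →
      UDH (insert u V) (fun x y => E x y ∨ (x = u ∧ y = a) ∨ (x = a ∧ y = u))
  | falseTwin {V : Finset ℕ} {E : ℕ → ℕ → Prop} (v u : ℕ) :
      v ∈ V → u ∉ V → UDH V E →
      UDH (insert u V) (fun x y => E x y ∨ (x = u ∧ E v y) ∨ (y = u ∧ E x v))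
  | trueTwin {V : Finset ℕ} {E : ℕ → ℕ → Prop} (v u : ℕ) :
      v ∈ V → u ∉ V → UDH V E →
      UDH (insert u V)
        (fun x y => E x y ∨ (x = u ∧ E v y) ∨ (y = u ∧ E x v) ∨
          (x = u ∧ y = v) ∨ (x = v ∧ y = u))

/-- The induced subdigraph on `C` is strongly connected. -/
def StronglyConn (A : ℕ → ℕ → Prop) (C : Finset ℕ) : Prop :=
  ∀ u ∈ C, ∀ v ∈ C, Reach (restrict A C) u v

/-- `C` is a strong component of the digraph with vertex set `V` and arcs `A`. -/
def IsStrongComponent (A : ℕ → ℕ → Prop) (V C : Finset ℕ) : Prop :=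
  C.Nonempty ∧ C ⊆ V ∧ StronglyConn A C ∧
    ∀ D, C ⊆ D → D ⊆ V → StronglyConn A D → D = C

/-- The induced subdigraph on `S` is weakly connected. -/
def WeaklyConn (A : ℕ → ℕ → Prop) (S : Finset ℕ) : Prop :=
  S.Nonempty ∧ ∀ u ∈ S, ∀ v ∈ S,
    Relation.ReflTransGen (fun x y => restrict A S x y ∨ restrict A S y x) u v

/-- The induced subdigraph on `V` is acyclic. -/
def AcyclicOn (A : ℕ → ℕ → Prop) (V : Finset ℕ) : Prop :=
  ∀ v ∈ V, ∀ n, 0 < n → ¬ walkLen (restrict A V) n v v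

/-- `CRle A V r`: the cycle rank of the digraph `(V, A)` is at most `r`.
This is the standard recursive definition: acyclic digraphs have rank 0, digraphs
decompose into their strong components, and deleting a vertex decreases rank by
at most one. -/
inductive CRle (A : ℕ → ℕ → Prop) : Finset ℕ → ℕ → Prop
  | base {V : Finset ℕ} {r : ℕ} : AcyclicOn A V → CRle A V r
  | scc {V : Finset ℕ} {r : ℕ} :
      (∀ C, IsStrongComponent A V C → CRle A C r) → CRle A V r
  | step {V : Finset ℕ} {r : ℕ} (v : ℕ) :
      v ∈ V → CRle A (V.erase v) r → CRle A V (r + 1)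

/-- The cycle rank of the digraph `(V, A)`. -/
noncomputable def cycleRank (A : ℕ → ℕ → Prop) (V : Finset ℕ) : ℕ :=
  sInf {r | CRle A V r}

/-- `CW k V A f`: the `k`-labeled digraph with vertices `V`, arcs `A` and labeling `f`
is constructible by a directed clique-width `k`-expression. -/
inductive CW (k : ℕ) : Finset ℕ → (ℕ → ℕ → Prop) → (ℕ → Fin k) → Prop
  | vertex (v : ℕ) (a : Fin k) : CW k {v} (fun _ _ => False) (fun _ => a)
  | union {V₁ V₂ : Finset ℕ} {A₁ A₂ : ℕ → ℕ → Prop} {f₁ f₂ : ℕ → Fin k} :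
      Disjoint V₁ V₂ → CW k V₁ A₁ f₁ → CW k V₂ A₂ f₂ →
      CW k (V₁ ∪ V₂) (fun x y => A₁ x y ∨ A₂ x y)
        (fun x => if x ∈ V₁ then f₁ x else f₂ x)
  | addArcs {V : Finset ℕ} {A : ℕ → ℕ → Prop} {f : ℕ → Fin k} (a b : Fin k) :
      a ≠ b → CW k V A f →
      CW k V (fun x y => A x y ∨ (x ∈ V ∧ y ∈ V ∧ f x = a ∧ f y = b)) f
  | relabel {V : Finset ℕ} {A : ℕ → ℕ → Prop} {f : ℕ → Fin k} (a b : Fin k) :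
      CW k V A f →
      CW k V A (fun x => if f x = a then b else f x)

/-! Each composition step makes both factors modules: a vertex outside `V₁` is joined to all of
`V₁` or to none of it, in each direction. So twins of a factor with at least two vertices stay
twins in the composition, and when both factors are single vertices these two vertices are twins,
having no other neighbours. -/

theorem dTwins_iff {A : ℕ → ℕ → Prop} {x y : ℕ} :
    DTwins A x y ↔ x ≠ y ∧ ¬A x x ∧ ¬A y y ∧
      ∀ w, w ≠ x → w ≠ y → (A w x ↔ A w y) ∧ (A x w ↔ A y w) := by
  simp only [DTwins, Set.ext_iff, Set.mem_sdiff, Set.mem_ofPred_eq, Set.mem_singleton_iff]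
  constructor
  · rintro ⟨hxy, hin, hout⟩
    refine ⟨hxy, fun h => ((hin x).1 ⟨h, hxy⟩).2 rfl, fun h => ((hin y).2 ⟨h, hxy.symm⟩).2 rfl,
      fun w hwx hwy => ⟨?_, ?_⟩⟩
    · simpa [hwx, hwy] using hin w
    · simpa [hwx, hwy] using hout w
  · rintro ⟨hxy, hx, hy, h⟩
    refine ⟨hxy, fun w => ?_, fun w => ?_⟩ <;>
    · by_cases hwx : w = x
      · subst hwx; simp [hx, hxy]
      by_cases hwy : w = y
      · subst hwy; simp [hy, Ne.symm hxy]
      simp [hwx, hwy, h w hwx hwy]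

theorem dTwins_of_rel_mem_pair {A : ℕ → ℕ → Prop} {x y : ℕ} (hxy : x ≠ y)
    (hirr : ∀ u, ¬A u u) (hmem : ∀ u v, A u v → u ∈ ({x, y} : Finset ℕ) ∧ v ∈ ({x, y} : Finset ℕ)) :
    DTwins A x y := by
  refine dTwins_iff.2 ⟨hxy, hirr x, hirr y, fun w hwx hwy => ?_⟩
  have hw : w ∉ ({x, y} : Finset ℕ) := by simp [hwx, hwy]
  exact ⟨iff_of_false (fun h => hw (hmem _ _ h).1) (fun h => hw (hmem _ _ h).1),
    iff_of_false (fun h => hw (hmem _ _ h).2) (fun h => hw (hmem _ _ h).2)⟩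

def IsModule (A : ℕ → ℕ → Prop) (M : Finset ℕ) : Prop :=
  ∀ w ∉ M, ∀ x ∈ M, ∀ y ∈ M, (A w x ↔ A w y) ∧ (A x w ↔ A y w)

theorem DTwins.of_isModule {A B : ℕ → ℕ → Prop} {M : Finset ℕ} {x y : ℕ}
    (hM : IsModule B M) (hBA : ∀ u ∈ M, ∀ v ∈ M, (B u v ↔ A u v))
    (hx : x ∈ M) (hy : y ∈ M) (h : DTwins A x y) : DTwins B x y := by
  obtain ⟨hxy, hxx, hyy, htw⟩ := dTwins_iff.1 h
  refine dTwins_iff.2 ⟨hxy, by rwa [hBA x hx x hx], by rwa [hBA y hy y hy], fun w hwx hwy => ?_⟩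
  by_cases hw : w ∈ M
  · rw [hBA w hw x hx, hBA w hw y hy, hBA x hx w hw, hBA y hy w hw]
    exact htw w hwx hwy
  · exact hM w hw x hx y hy

/-- Disjoint union, series and order composition are the cases `(c₁, c₂) = (False, False)`,
`(True, True)` and `(True, False)`. -/
def composeArc (V₁ V₂ : Finset ℕ) (A₁ A₂ : ℕ → ℕ → Prop) (c₁ c₂ : Prop) : ℕ → ℕ → Prop :=
  fun x y => A₁ x y ∨ A₂ x y ∨ (x ∈ V₁ ∧ y ∈ V₂ ∧ c₁) ∨ (x ∈ V₂ ∧ y ∈ V₁ ∧ c₂)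

section composeArc

variable {V₁ V₂ : Finset ℕ} {A₁ A₂ : ℕ → ℕ → Prop} {c₁ c₂ : Prop}

theorem composeArc_comm :
    composeArc V₁ V₂ A₁ A₂ c₁ c₂ = composeArc V₂ V₁ A₂ A₁ c₂ c₁ := by
  funext x y
  exact propext (by simp only [composeArc]; tauto)

theorem composeArc_rel_mem {u v : ℕ} (h₁ : ∀ u v, A₁ u v → u ∈ V₁ ∧ v ∈ V₁)
    (h₂ : ∀ u v, A₂ u v → u ∈ V₂ ∧ v ∈ V₂) (h : composeArc V₁ V₂ A₁ A₂ c₁ c₂ u v) :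
    u ∈ V₁ ∪ V₂ ∧ v ∈ V₁ ∪ V₂ := by
  simp only [Finset.mem_union]
  rcases h with h | h | ⟨hu, hv, -⟩ | ⟨hu, hv, -⟩
  · exact ⟨.inl (h₁ u v h).1, .inl (h₁ u v h).2⟩
  · exact ⟨.inr (h₂ u v h).1, .inr (h₂ u v h).2⟩
  · exact ⟨.inl hu, .inr hv⟩
  · exact ⟨.inr hu, .inl hv⟩

theorem composeArc_irrefl (hd : Disjoint V₁ V₂) (h₁ : ∀ u, ¬A₁ u u) (h₂ : ∀ u, ¬A₂ u u) (u : ℕ) :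
    ¬composeArc V₁ V₂ A₁ A₂ c₁ c₂ u u := by
  rintro (h | h | ⟨hu₁, hu₂, -⟩ | ⟨hu₂, hu₁, -⟩)
  · exact h₁ u h
  · exact h₂ u h
  all_goals exact Finset.disjoint_left.1 hd hu₁ hu₂

theorem composeArc_iff_left (hd : Disjoint V₁ V₂) (h₂ : ∀ u v, A₂ u v → u ∈ V₂ ∧ v ∈ V₂)
    {u v : ℕ} (hu : u ∈ V₁) (hv : v ∈ V₁) :
    composeArc V₁ V₂ A₁ A₂ c₁ c₂ u v ↔ A₁ u v := by
  have hu₂ : u ∉ V₂ := Finset.disjoint_left.1 hd hu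
  have hv₂ : v ∉ V₂ := Finset.disjoint_left.1 hd hv
  have : ¬A₂ u v := fun h => hu₂ (h₂ u v h).1
  simp [composeArc, hu₂, hv₂, this]

theorem isModule_composeArc_left (hd : Disjoint V₁ V₂) (h₁ : ∀ u v, A₁ u v → u ∈ V₁ ∧ v ∈ V₁)
    (h₂ : ∀ u v, A₂ u v → u ∈ V₂ ∧ v ∈ V₂) : IsModule (composeArc V₁ V₂ A₁ A₂ c₁ c₂) V₁ := by
  intro w hw x hx y hy
  have hA₁ : ∀ a, ¬A₁ w a ∧ ¬A₁ a w :=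
    fun a => ⟨fun h => hw (h₁ _ _ h).1, fun h => hw (h₁ _ _ h).2⟩
  have hA₂ : ∀ a ∈ V₁, ¬A₂ w a ∧ ¬A₂ a w := fun a ha =>
    ⟨fun h => Finset.disjoint_left.1 hd ha (h₂ _ _ h).2,
      fun h => Finset.disjoint_left.1 hd ha (h₂ _ _ h).1⟩
  simp [composeArc, hw, hx, hy, hA₁, hA₂ x hx, hA₂ y hy]

theorem DTwins.composeArc_left (hd : Disjoint V₁ V₂) (h₁ : ∀ u v, A₁ u v → u ∈ V₁ ∧ v ∈ V₁)
    (h₂ : ∀ u v, A₂ u v → u ∈ V₂ ∧ v ∈ V₂) {x y : ℕ} (hx : x ∈ V₁) (hy : y ∈ V₁)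
    (h : DTwins A₁ x y) :
    DTwins (composeArc V₁ V₂ A₁ A₂ c₁ c₂) x y :=
  h.of_isModule (isModule_composeArc_left hd h₁ h₂)
    (fun _ hu _ hv => composeArc_iff_left hd h₂ hu hv) hx hy

end composeArc

namespace DCo

@[elab_as_elim]
theorem induction_on_composeArc {P : Finset ℕ → (ℕ → ℕ → Prop) → Prop}
    (single : ∀ v, P {v} fun _ _ => False)
    (compose : ∀ (V₁ V₂ : Finset ℕ) (A₁ A₂ : ℕ → ℕ → Prop) (c₁ c₂ : Prop), Disjoint V₁ V₂ →
      DCo V₁ A₁ → DCo V₂ A₂ → P V₁ A₁ → P V₂ A₂ → P (V₁ ∪ V₂) (composeArc V₁ V₂ A₁ A₂ c₁ c₂))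
    {V : Finset ℕ} {A : ℕ → ℕ → Prop} (h : DCo V A) : P V A := by
  induction h with
  | single v => exact single v
  | union hd h₁ h₂ ih₁ ih₂ =>
    convert compose _ _ _ _ False False hd h₁ h₂ ih₁ ih₂ using 1
    ext x y
    simp [composeArc]
  | series hd h₁ h₂ ih₁ ih₂ =>
    convert compose _ _ _ _ True True hd h₁ h₂ ih₁ ih₂ using 1
    ext x y
    simp [composeArc]
  | order hd h₁ h₂ ih₁ ih₂ =>
    convert compose _ _ _ _ True False hd h₁ h₂ ih₁ ih₂ using 1
    ext x y
    simp [composeArc]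

variable {V : Finset ℕ} {A : ℕ → ℕ → Prop}

theorem rel_mem (h : DCo V A) : ∀ u v, A u v → u ∈ V ∧ v ∈ V :=
  h.induction_on_composeArc (by simp)
    fun _ _ _ _ _ _ _ _ _ ih₁ ih₂ _ _ => composeArc_rel_mem ih₁ ih₂

theorem irrefl (h : DCo V A) : ∀ u, ¬A u u :=
  h.induction_on_composeArc (by simp)
    fun _ _ _ _ _ _ hd _ _ ih₁ ih₂ => composeArc_irrefl hd ih₁ ih₂

theorem nonempty (h : DCo V A) : V.Nonempty :=
  h.induction_on_composeArc Finset.singleton_nonempty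
    fun _ _ _ _ _ _ _ _ _ ih₁ _ => ih₁.mono Finset.subset_union_left

end DCo

theorem exists_dTwins_composeArc {V₁ V₂ : Finset ℕ} {A₁ A₂ : ℕ → ℕ → Prop} (c₁ c₂ : Prop)
    (hd : Disjoint V₁ V₂) (h₁ : DCo V₁ A₁) (h₂ : DCo V₂ A₂)
    (ih₁ : 2 ≤ V₁.card → ∃ x ∈ V₁, ∃ y ∈ V₁, DTwins A₁ x y)
    (ih₂ : 2 ≤ V₂.card → ∃ x ∈ V₂, ∃ y ∈ V₂, DTwins A₂ x y) :
    ∃ x ∈ V₁ ∪ V₂, ∃ y ∈ V₁ ∪ V₂, DTwins (composeArc V₁ V₂ A₁ A₂ c₁ c₂) x y := by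
  by_cases hc₁ : 2 ≤ V₁.card
  · obtain ⟨x, hx, y, hy, hxy⟩ := ih₁ hc₁
    exact ⟨x, Finset.mem_union_left _ hx, y, Finset.mem_union_left _ hy,
      hxy.composeArc_left hd h₁.rel_mem h₂.rel_mem hx hy⟩
  by_cases hc₂ : 2 ≤ V₂.card
  · obtain ⟨x, hx, y, hy, hxy⟩ := ih₂ hc₂
    rw [composeArc_comm]
    exact ⟨x, Finset.mem_union_right _ hx, y, Finset.mem_union_right _ hy,
      hxy.composeArc_left hd.symm h₂.rel_mem h₁.rel_mem hx hy⟩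
  obtain ⟨a, rfl⟩ : ∃ a, V₁ = {a} := Finset.card_eq_one.1 (by have := h₁.nonempty.card_pos; omega)
  obtain ⟨b, rfl⟩ : ∃ b, V₂ = {b} := Finset.card_eq_one.1 (by have := h₂.nonempty.card_pos; omega)
  refine ⟨a, by simp, b, by simp, dTwins_of_rel_mem_pair (Finset.disjoint_singleton.1 hd)
    (composeArc_irrefl hd h₁.irrefl h₂.irrefl) fun u v huv => ?_⟩
  simpa using composeArc_rel_mem h₁.rel_mem h₂.rel_mem huv

theorem stmt_0 (V : Finset ℕ) (A : ℕ → ℕ → Prop)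
    (h : DCo V A) (hcard : 2 ≤ V.card) :
    ∃ x ∈ V, ∃ y ∈ V, DTwins A x y := by
  revert hcard
  refine h.induction_on_composeArc (by simp) ?_
  intro V₁ V₂ A₁ A₂ c₁ c₂ hd h₁ h₂ ih₁ ih₂ _
  exact exists_dTwins_composeArc c₁ c₂ hd h₁ h₂ ih₁ ih₂
end

section
/- Every directed co-graph is a twin-distance-hereditary digraph. -/
/-!
Directed co-graphs can be grown from a single vertex by adding directed twins alone. A twin
added on one side of a composition is still a twin in the composite, because the composition
treats all vertices of a side alike. Hence a composition of two twin-grown digraphs is grown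
from the composition of two single vertices, itself a pair of twins, by replaying the twin
additions of both sides.
-/

/-- Arcs of the composition of `(V₁, A₁)` and `(V₂, A₂)` in which all arcs from `V₁` to `V₂`
are added if `p` holds and all arcs from `V₂` to `V₁` if `q` holds: `p = q = False` is the
disjoint union, `p = q = True` the series and `p = True`, `q = False` the order composition. -/
def joinArc (V₁ V₂ : Finset ℕ) (A₁ A₂ : ℕ → ℕ → Prop) (p q : Prop) : ℕ → ℕ → Prop :=
  fun x y => A₁ x y ∨ A₂ x y ∨ (x ∈ V₁ ∧ y ∈ V₂ ∧ p) ∨ (x ∈ V₂ ∧ y ∈ V₁ ∧ q)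

inductive TwinGrown : Finset ℕ → (ℕ → ℕ → Prop) → Prop
  | single (v : ℕ) : TwinGrown {v} (fun _ _ => False)
  | twin {V : Finset ℕ} {A : ℕ → ℕ → Prop} (v u : ℕ) (auv avu : Prop) :
      v ∈ V → u ∉ V → TwinGrown V A → TwinGrown (insert u V) (twinArc A v u auv avu)

section

variable {V V₁ V₂ : Finset ℕ} {A A₁ A₂ : ℕ → ℕ → Prop} {p q : Prop}

theorem joinArc_comm : joinArc V₁ V₂ A₁ A₂ p q = joinArc V₂ V₁ A₂ A₁ q p := by
  funext x y
  exact propext (by simp only [joinArc]; tauto)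

theorem twinArc_joinArc (hA₁ : ∀ x y, A₁ x y → x ∈ V₁ ∧ y ∈ V₁)
    (hA₂ : ∀ x y, A₂ x y → x ∈ V₂ ∧ y ∈ V₂) (hd : Disjoint V₁ V₂) {v u : ℕ} (auv avu : Prop)
    (hv : v ∈ V₁) (hu₁ : u ∉ V₁) (hu₂ : u ∉ V₂) :
    twinArc (joinArc V₁ V₂ A₁ A₂ p q) v u auv avu =
      joinArc (insert u V₁) V₂ (twinArc A₁ v u auv avu) A₂ p q := by
  have hv₂ : v ∉ V₂ := Finset.disjoint_left.mp hd hv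
  funext x y
  simp only [twinArc, joinArc, Finset.mem_insert]
  grind

namespace TwinGrown

theorem mem_of_arc (h : TwinGrown V A) : ∀ x y, A x y → x ∈ V ∧ y ∈ V := by
  induction h with
  | single v => exact fun _ _ => False.elim
  | twin v u auv avu hv hu _ ih =>
    intro x y hxy
    simp only [twinArc] at hxy
    simp only [Finset.mem_insert]
    grind

theorem twinDH (h : TwinGrown V A) : TwinDH V A := by
  induction h with
  | single v => exact .single v
  | twin v u auv avu hv hu _ ih => exact ih.twin v u auv avu hv hu

theorem join_twin_left (h : TwinGrown (V₁ ∪ V₂) (joinArc V₁ V₂ A₁ A₂ p q))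
    (hA₁ : ∀ x y, A₁ x y → x ∈ V₁ ∧ y ∈ V₁) (hA₂ : ∀ x y, A₂ x y → x ∈ V₂ ∧ y ∈ V₂)
    (hd : Disjoint V₁ V₂) {v u : ℕ} (auv avu : Prop) (hv : v ∈ V₁) (hu : u ∉ V₁ ∪ V₂) :
    TwinGrown (insert u V₁ ∪ V₂) (joinArc (insert u V₁) V₂ (twinArc A₁ v u auv avu) A₂ p q) := by
  rw [Finset.mem_union, not_or] at hu
  rw [Finset.insert_union, ← twinArc_joinArc hA₁ hA₂ hd auv avu hv hu.1 hu.2]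
  exact h.twin v u auv avu (Finset.mem_union_left _ hv) (by simp [hu.1, hu.2])

theorem join_twin_right (h : TwinGrown (V₁ ∪ V₂) (joinArc V₁ V₂ A₁ A₂ p q))
    (hA₁ : ∀ x y, A₁ x y → x ∈ V₁ ∧ y ∈ V₁) (hA₂ : ∀ x y, A₂ x y → x ∈ V₂ ∧ y ∈ V₂)
    (hd : Disjoint V₁ V₂) {v u : ℕ} (auv avu : Prop) (hv : v ∈ V₂) (hu : u ∉ V₁ ∪ V₂) :
    TwinGrown (V₁ ∪ insert u V₂) (joinArc V₁ (insert u V₂) A₁ (twinArc A₂ v u auv avu) p q) := by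
  rw [Finset.union_comm, joinArc_comm] at h ⊢
  exact join_twin_left h hA₂ hA₁ hd.symm auv avu hv (by rwa [Finset.union_comm])

theorem join (h₁ : TwinGrown V₁ A₁) (h₂ : TwinGrown V₂ A₂) (hd : Disjoint V₁ V₂) :
    TwinGrown (V₁ ∪ V₂) (joinArc V₁ V₂ A₁ A₂ p q) := by
  induction h₁ with
  | single z =>
    induction h₂ with
    | single w =>
      have hwz : w ∉ ({z} : Finset ℕ) := by simpa [eq_comm] using hd
      have hpair := (TwinGrown.single z).twin z w q p (Finset.mem_singleton_self z) hwz
      rw [Finset.union_comm, ← Finset.insert_eq]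
      convert hpair using 1
      funext x y
      exact propext (by simp only [joinArc, twinArc, Finset.mem_singleton]; tauto)
    | twin v u auv avu hv hu h₂ ih =>
      have hz : z ∉ insert u _ := Finset.disjoint_singleton_left.mp hd
      have hd' := hd.mono_right (Finset.subset_insert u _)
      exact join_twin_right (ih hd') (fun _ _ => False.elim) h₂.mem_of_arc hd' auv avu hv
        (by grind)
  | twin v u auv avu hv hu h₁ ih =>
    have hd' := hd.mono_left (Finset.subset_insert u _)
    exact join_twin_left (ih hd') h₁.mem_of_arc h₂.mem_of_arc hd' auv avu hv
      (by simpa [hu] using Finset.disjoint_left.mp hd (Finset.mem_insert_self u _))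

end TwinGrown

theorem DCo.twinGrown (h : DCo V A) : TwinGrown V A := by
  induction h with
  | single v => exact .single v
  | union hd _ _ ih₁ ih₂ =>
    convert ih₁.join ih₂ hd (p := False) (q := False) using 1
    funext x y
    simp [joinArc]
  | series hd _ _ ih₁ ih₂ =>
    convert ih₁.join ih₂ hd (p := True) (q := True) using 1
    funext x y
    simp [joinArc]
  | order hd _ _ ih₁ ih₂ =>
    convert ih₁.join ih₂ hd (p := True) (q := False) using 1
    funext x y
    simp [joinArc]

end

theorem stmt_2 (V : Finset ℕ) (A : ℕ → ℕ → Prop) (h : DCo V A) :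
    TwinDH V A :=
  h.twinGrown.twinDH
end

section
/- If G is a twin-distance-hereditary digraph, then every weakly connected induced subdigraph H of G is also a twin-distance-hereditary digraph. -/
/-! Induction on the construction. A disjoint union has no arcs between its parts, so a weakly
connected `S` lies inside one of them. If the last vertex `u` was added as a twin or pendant of
`v` and both lie in `S`, every arc at `u` either joins `u` to `v` or is mirrored at `v`, so
contracting `u` onto `v` shows that `S \ {u}` is weakly connected, and `S` is rebuilt from it by
the same operation. If `u ∈ S` but `v ∉ S`, a pendant `u` is isolated in `S`, so `S = {u}`; a twin
`u` can stand in for `v`, and the transposition of `u` and `v` maps `S` isomorphically onto an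
induced subdigraph of the smaller digraph. -/

open Relation

section Restrict

variable {A B : ℕ → ℕ → Prop} {S : Finset ℕ}

lemma restrict_congr (h : ∀ x ∈ S, ∀ y ∈ S, A x y ↔ B x y) : restrict A S = restrict B S := by
  funext x y
  exact propext ⟨fun ⟨hA, hx, hy⟩ => ⟨(h x hx y hy).1 hA, hx, hy⟩,
    fun ⟨hB, hx, hy⟩ => ⟨(h x hx y hy).2 hB, hx, hy⟩⟩

lemma restrict_eq_of_notMem {u : ℕ} (hB : ∀ x y, x ≠ u → y ≠ u → (B x y ↔ A x y))
    (hu : u ∉ S) : restrict B S = restrict A S :=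
  restrict_congr fun x hx y hy => hB x y (ne_of_mem_of_not_mem hx hu) (ne_of_mem_of_not_mem hy hu)

lemma WeaklyConn.of_restrict_eq (h : restrict A S = restrict B S) (hw : WeaklyConn A S) :
    WeaklyConn B S := by
  rwa [WeaklyConn, ← h]

lemma WeaklyConn.image (f : ℕ → ℕ) (hf : ∀ x ∈ S, ∀ y ∈ S, A x y → f x = f y ∨ B (f x) (f y))
    (hw : WeaklyConn A S) : WeaklyConn B (S.image f) := by
  refine ⟨hw.1.image f, ?_⟩
  simp only [Finset.mem_image]
  rintro _ ⟨x, hx, rfl⟩ _ ⟨y, hy, rfl⟩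
  have step : ∀ a ∈ S, ∀ b ∈ S, A a b →
      ReflTransGen (fun p q => restrict B (S.image f) p q ∨ restrict B (S.image f) q p)
        (f a) (f b) ∧
      ReflTransGen (fun p q => restrict B (S.image f) p q ∨ restrict B (S.image f) q p)
        (f b) (f a) := by
    intro a ha b hb hab
    rcases hf a ha b hb hab with heq | hB
    · rw [heq]; exact ⟨.refl, .refl⟩
    · have hr : restrict B (S.image f) (f a) (f b) :=
        ⟨hB, Finset.mem_image_of_mem f ha, Finset.mem_image_of_mem f hb⟩
      exact ⟨.single (Or.inl hr), .single (Or.inr hr)⟩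
  refine ReflTransGen.lift' f ?_ x y (hw.2 x hx y hy)
  rintro a b (⟨hab, ha, hb⟩ | ⟨hba, hb, ha⟩)
  exacts [(step a ha b hb hab).1, (step b hb a ha hba).2]

lemma WeaklyConn.iff_of_arc {P : ℕ → Prop} (hw : WeaklyConn A S)
    (hP : ∀ x ∈ S, ∀ y ∈ S, A x y → (P x ↔ P y)) {x y : ℕ} (hx : x ∈ S) (hy : y ∈ S) :
    P x ↔ P y := by
  induction hw.2 x hx y hy with
  | refl => rfl
  | tail _ hbc ih =>
    rcases hbc with ⟨hbc, hb, hc⟩ | ⟨hcb, hc, hb⟩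
    exacts [(ih hb).trans (hP _ hb _ hc hbc), (ih hb).trans (hP _ hc _ hb hcb).symm]

lemma WeaklyConn.erase {u w : ℕ} (hw : WeaklyConn A S) (hwS : w ∈ S) (hwu : w ≠ u)
    (hout : ∀ y, A u y → y = w ∨ A w y) (hin : ∀ x, A x u → x = w ∨ A x w) :
    WeaklyConn A (S.erase u) := by
  have himg : S.image (fun z => if z = u then w else z) = S.erase u := by
    ext z
    simp only [Finset.mem_image, Finset.mem_erase]
    constructor
    · rintro ⟨x, hx, rfl⟩
      split_ifs with hxu
      exacts [⟨hwu, hwS⟩, ⟨hxu, hx⟩]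
    · rintro ⟨hzu, hz⟩
      exact ⟨z, hz, if_neg hzu⟩
  rw [← himg]
  refine hw.image _ fun x _ y _ hxy => ?_
  by_cases hxu : x = u <;> by_cases hyu : y = u
  · simp [hxu, hyu]
  · subst hxu
    simpa [hyu, eq_comm] using hout y hxy
  · subst hyu
    simpa [hxu] using hin x hxy
  · simp [hxu, hyu, hxy]

end Restrict

namespace TwinDH

variable {V : Finset ℕ} {A : ℕ → ℕ → Prop}

lemma arc_mem (h : TwinDH V A) {x y : ℕ} (hxy : A x y) : x ∈ V ∧ y ∈ V := by
  induction h generalizing x y with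
  | single => exact hxy.elim
  | union _ _ _ ih₁ ih₂ =>
    rcases hxy with hxy | hxy
    · exact (ih₁ hxy).imp (Finset.mem_union_left _) (Finset.mem_union_left _)
    · exact (ih₂ hxy).imp (Finset.mem_union_right _) (Finset.mem_union_right _)
  | twin v u _ _ hv _ _ ih =>
    simp only [Finset.mem_insert]
    rcases hxy with hxy | ⟨rfl, rfl, -⟩ | ⟨rfl, rfl, -⟩ | ⟨rfl, hxy⟩ | ⟨rfl, hxy⟩
    · exact ⟨Or.inr (ih hxy).1, Or.inr (ih hxy).2⟩
    · exact ⟨Or.inl rfl, Or.inr hv⟩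
    · exact ⟨Or.inr hv, Or.inl rfl⟩
    · exact ⟨Or.inl rfl, Or.inr (ih hxy).2⟩
    · exact ⟨Or.inr (ih hxy).1, Or.inl rfl⟩
  | pendPlus a u ha _ _ ih | pendMinus a u ha _ _ ih =>
    simp only [Finset.mem_insert]
    rcases hxy with hxy | ⟨rfl, rfl⟩
    · exact ⟨Or.inr (ih hxy).1, Or.inr (ih hxy).2⟩
    all_goals simp [ha]

lemma ne_of_arc {u : ℕ} (h : TwinDH V A) (hu : u ∉ V) {x y : ℕ} (hxy : A x y) :
    x ≠ u ∧ y ≠ u :=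
  (h.arc_mem hxy).imp (fun hx e => hu (e ▸ hx)) (fun hy e => hu (e ▸ hy))

lemma irrefl (h : TwinDH V A) (x : ℕ) : ¬ A x x := by
  induction h with
  | single => exact id
  | union _ _ _ ih₁ ih₂ => exact fun hx => hx.elim ih₁ ih₂
  | twin v u _ _ hv hu h ih =>
    rintro (hx | ⟨rfl, rfl, -⟩ | ⟨rfl, rfl, -⟩ | ⟨rfl, hx⟩ | ⟨rfl, hx⟩)
    · exact ih hx
    · exact hu hv
    · exact hu hv
    · exact hu (h.arc_mem hx).2
    · exact hu (h.arc_mem hx).1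
  | pendPlus a u ha hu _ ih | pendMinus a u ha hu _ ih =>
    rintro (hx | ⟨rfl, rfl⟩)
    exacts [ih hx, hu ha]

lemma image (σ : ℕ ≃ ℕ) (h : TwinDH V A) :
    TwinDH (V.image σ) (fun x y => A (σ.symm x) (σ.symm y)) := by
  have hnot : ∀ {u : ℕ} {W : Finset ℕ}, u ∉ W → σ u ∉ W.image σ := fun hu =>
    (σ.injective.mem_finset_image).not.2 hu
  induction h with
  | single v => simpa using single (σ v)
  | union hd _ _ ih₁ ih₂ =>
    rw [Finset.image_union]
    exact union ((Finset.disjoint_image σ.injective).2 hd) ih₁ ih₂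
  | twin v u auv avu hv hu _ ih =>
    rw [Finset.image_insert]
    convert twin (σ v) (σ u) auv avu (Finset.mem_image_of_mem σ hv) (hnot hu) ih using 1
    funext x y
    simp only [twinArc, Equiv.symm_apply_eq, Equiv.symm_apply_apply]
  | pendPlus a u ha hu _ ih =>
    rw [Finset.image_insert]
    convert pendPlus (σ a) (σ u) (Finset.mem_image_of_mem σ ha) (hnot hu) ih using 1
    funext x y
    simp only [Equiv.symm_apply_eq]
  | pendMinus a u ha hu _ ih =>
    rw [Finset.image_insert]
    convert pendMinus (σ a) (σ u) (Finset.mem_image_of_mem σ ha) (hnot hu) ih using 1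
    funext x y
    simp only [Equiv.symm_apply_eq]

end TwinDH

section Extension

variable {A : ℕ → ℕ → Prop} {T : Finset ℕ} {u v : ℕ} {auv avu : Prop}

lemma twinArc_iff_of_ne {x y : ℕ} (hx : x ≠ u) (hy : y ≠ u) :
    twinArc A v u auv avu x y ↔ A x y := by
  simp [twinArc, hx, hy]

lemma restrict_twinArc (hA : ∀ x y, A x y → x ≠ u ∧ y ≠ u) (hv : v ∈ T) (hu : u ∉ T) :
    restrict (twinArc A v u auv avu) (insert u T) = twinArc (restrict A T) v u auv avu := by
  funext x y
  simp only [restrict, twinArc, Finset.mem_insert, eq_iff_iff]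
  grind

lemma restrict_insert_arc {p q : ℕ} (hA : ∀ x y, A x y → x ≠ u ∧ y ≠ u)
    (hp : p ∈ insert u T) (hq : q ∈ insert u T) :
    restrict (fun x y => A x y ∨ (x = p ∧ y = q)) (insert u T) =
      fun x y => restrict A T x y ∨ (x = p ∧ y = q) := by
  funext x y
  simp only [restrict, Finset.mem_insert, eq_iff_iff] at hp hq ⊢
  grind

lemma twinArc_iff_swap (hA : ∀ x y, A x y → x ≠ u ∧ y ≠ u) (hvv : ¬ A v v) {x y : ℕ}
    (hx : x ≠ v) (hy : y ≠ v) :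
    twinArc A v u auv avu x y ↔ A (Equiv.swap u v x) (Equiv.swap u v y) := by
  simp only [twinArc, Equiv.swap_apply_def]
  grind

end Extension

lemma TwinDH.singleton_restrict {B : ℕ → ℕ → Prop} {v : ℕ} (hB : ¬ B v v) :
    TwinDH {v} (restrict B {v}) := by
  convert TwinDH.single v using 1
  funext x y
  refine propext ⟨?_, False.elim⟩
  rintro ⟨hxy, hx, hy⟩
  rw [Finset.mem_singleton] at hx hy
  subst hx hy
  exact hB hxy

lemma TwinDH.restrict_of_equiv {A B : ℕ → ℕ → Prop} {S : Finset ℕ} (σ : ℕ ≃ ℕ)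
    (hσ : ∀ x ∈ S, ∀ y ∈ S, A x y ↔ B (σ x) (σ y))
    (h : TwinDH (S.image σ) (restrict B (S.image σ))) : TwinDH S (restrict A S) := by
  have h' := h.image σ.symm
  rw [Finset.image_image, σ.symm_comp_self, Finset.image_id] at h'
  convert h' using 1
  funext x y
  simp only [restrict, Equiv.symm_symm, σ.injective.mem_finset_image]
  exact propext ⟨fun ⟨hxy, hx, hy⟩ => ⟨(hσ x hx y hy).1 hxy, hx, hy⟩,
    fun ⟨hxy, hx, hy⟩ => ⟨(hσ x hx y hy).2 hxy, hx, hy⟩⟩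

def HereditaryTwinDH (V : Finset ℕ) (A : ℕ → ℕ → Prop) : Prop :=
  ∀ S ⊆ V, WeaklyConn A S → TwinDH S (restrict A S)

namespace HereditaryTwinDH

variable {V : Finset ℕ} {A B : ℕ → ℕ → Prop} {S : Finset ℕ} {u : ℕ}

lemma single (v : ℕ) : HereditaryTwinDH {v} (fun _ _ => False) := by
  intro S hS hw
  obtain rfl : S = {v} := (Finset.subset_singleton_iff.1 hS).resolve_left hw.1.ne_empty
  exact TwinDH.singleton_restrict id

lemma union {V₁ V₂ : Finset ℕ} {A₁ A₂ : ℕ → ℕ → Prop} (hd : Disjoint V₁ V₂)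
    (h₁ : TwinDH V₁ A₁) (h₂ : TwinDH V₂ A₂)
    (ih₁ : HereditaryTwinDH V₁ A₁) (ih₂ : HereditaryTwinDH V₂ A₂) :
    HereditaryTwinDH (V₁ ∪ V₂) (fun x y => A₁ x y ∨ A₂ x y) := by
  intro S hS hw
  obtain ⟨w, hwS⟩ := hw.1
  have hside : ∀ x ∈ S, x ∈ V₁ ↔ w ∈ V₁ := by
    refine fun x hx => hw.iff_of_arc (P := (· ∈ V₁)) ?_ hx hwS
    rintro x - y - (hxy | hxy)
    · simp [(h₁.arc_mem hxy).1, (h₁.arc_mem hxy).2]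
    · simp [Finset.disjoint_right.1 hd (h₂.arc_mem hxy).1,
        Finset.disjoint_right.1 hd (h₂.arc_mem hxy).2]
  by_cases hw₁ : w ∈ V₁
  · have hS₁ : S ⊆ V₁ := fun x hx => (hside x hx).2 hw₁
    have hagree : ∀ x ∈ S, ∀ y ∈ S, A₁ x y ∨ A₂ x y ↔ A₁ x y := fun x hx _ _ =>
      or_iff_left fun hxy => Finset.disjoint_left.1 hd (hS₁ hx) (h₂.arc_mem hxy).1
    rw [restrict_congr hagree]
    exact ih₁ S hS₁ (hw.of_restrict_eq (restrict_congr hagree))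
  · have hS₂ : S ⊆ V₂ := fun x hx =>
      (Finset.mem_union.1 (hS hx)).resolve_left fun hx₁ => hw₁ ((hside x hx).1 hx₁)
    have hagree : ∀ x ∈ S, ∀ y ∈ S, A₁ x y ∨ A₂ x y ↔ A₂ x y := fun x hx _ _ =>
      or_iff_right fun hxy => Finset.disjoint_right.1 hd (hS₂ hx) (h₁.arc_mem hxy).1
    rw [restrict_congr hagree]
    exact ih₂ S hS₂ (hw.of_restrict_eq (restrict_congr hagree))

lemma of_notMem (hB : ∀ x y, x ≠ u → y ≠ u → (B x y ↔ A x y)) (ih : HereditaryTwinDH V A)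
    (hS : S ⊆ V) (hu : u ∉ S) (hw : WeaklyConn B S) : TwinDH S (restrict A S) :=
  ih S hS (hw.of_restrict_eq (restrict_eq_of_notMem hB hu))

lemma twin (h : TwinDH V A) (ih : HereditaryTwinDH V A) {v : ℕ} {auv avu : Prop} (hv : v ∈ V)
    (hu : u ∉ V) : HereditaryTwinDH (insert u V) (twinArc A v u auv avu) := by
  intro S hS hw
  have hA : ∀ x y, A x y → x ≠ u ∧ y ≠ u := fun _ _ => h.ne_of_arc hu
  have hvu : v ≠ u := ne_of_mem_of_not_mem hv hu
  have hB : ∀ x y, x ≠ u → y ≠ u → (twinArc A v u auv avu x y ↔ A x y) :=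
    fun _ _ => twinArc_iff_of_ne
  by_cases huS : u ∈ S
  swap
  · rw [restrict_eq_of_notMem hB huS]
    exact ih.of_notMem hB ((Finset.subset_insert_iff_of_notMem huS).1 hS) huS hw
  by_cases hvS : v ∈ S
  · have hvS' : v ∈ S.erase u := Finset.mem_erase.2 ⟨hvu, hvS⟩
    have hwS : WeaklyConn (twinArc A v u auv avu) (S.erase u) :=
      hw.erase hvS hvu (fun _ _ => by grind [twinArc]) (fun _ _ => by grind [twinArc])
    have h' := TwinDH.twin v u auv avu hvS' (Finset.notMem_erase u S)
      (ih.of_notMem hB (Finset.subset_insert_iff.1 hS) (Finset.notMem_erase u S) hwS)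
    rwa [← restrict_twinArc hA hvS' (Finset.notMem_erase u S), Finset.insert_erase huS] at h'
  · -- `u` is a twin of `v`, so swapping them identifies `S` with a subdigraph of `(V, A)`.
    have hσ : ∀ x ∈ S, ∀ y ∈ S, twinArc A v u auv avu x y ↔
        A (Equiv.swap u v x) (Equiv.swap u v y) := fun x hx y hy =>
      twinArc_iff_swap hA (h.irrefl v) (ne_of_mem_of_not_mem hx hvS) (ne_of_mem_of_not_mem hy hvS)
    have hsub : S.image (Equiv.swap u v) ⊆ V := by
      intro z hz
      obtain ⟨x, hx, rfl⟩ := Finset.mem_image.1 hz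
      rcases eq_or_ne x u with rfl | hxu
      · rwa [Equiv.swap_apply_left]
      · rw [Equiv.swap_apply_of_ne_of_ne hxu (ne_of_mem_of_not_mem hx hvS)]
        exact (Finset.mem_insert.1 (hS hx)).resolve_left hxu
    exact TwinDH.restrict_of_equiv _ hσ
      (ih _ hsub (hw.image _ fun x hx y hy hxy => Or.inr ((hσ x hx y hy).1 hxy)))

lemma pendant (h : TwinDH V A) (ih : HereditaryTwinDH V A) {a p q : ℕ} (ha : a ∈ V) (hu : u ∉ V)
    (hpq : p = u ∧ q = a ∨ p = a ∧ q = u)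
    (attach : ∀ {T : Finset ℕ} {C : ℕ → ℕ → Prop}, a ∈ T → u ∉ T → TwinDH T C →
      TwinDH (insert u T) (fun x y => C x y ∨ (x = p ∧ y = q))) :
    HereditaryTwinDH (insert u V) (fun x y => A x y ∨ (x = p ∧ y = q)) := by
  intro S hS hw
  have hA : ∀ x y, A x y → x ≠ u ∧ y ≠ u := fun _ _ => h.ne_of_arc hu
  have hau : a ≠ u := ne_of_mem_of_not_mem ha hu
  have hB : ∀ x y, x ≠ u → y ≠ u → (A x y ∨ (x = p ∧ y = q) ↔ A x y) := by
    intro x y hx hy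
    refine or_iff_left ?_
    rintro ⟨rfl, rfl⟩
    rcases hpq with ⟨rfl, -⟩ | ⟨-, rfl⟩
    exacts [hx rfl, hy rfl]
  by_cases huS : u ∈ S
  swap
  · rw [restrict_eq_of_notMem hB huS]
    exact ih.of_notMem hB ((Finset.subset_insert_iff_of_notMem huS).1 hS) huS hw
  by_cases haS : a ∈ S
  · have haS' : a ∈ S.erase u := Finset.mem_erase.2 ⟨hau, haS⟩
    have hwS : WeaklyConn (fun x y => A x y ∨ (x = p ∧ y = q)) (S.erase u) :=
      hw.erase haS hau (fun _ _ => by grind) (fun _ _ => by grind)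
    have h' := attach haS' (Finset.notMem_erase u S)
      (ih.of_notMem hB (Finset.subset_insert_iff.1 hS) (Finset.notMem_erase u S) hwS)
    have hpq' : p ∈ insert u (S.erase u) ∧ q ∈ insert u (S.erase u) := by
      rcases hpq with ⟨rfl, rfl⟩ | ⟨rfl, rfl⟩ <;> simp [haS', hau]
    rwa [← restrict_insert_arc hA hpq'.1 hpq'.2, Finset.insert_erase huS] at h'
  · -- The only arc at `u` leaves `S`, so `S = {u}`.
    have hSu : ∀ x ∈ S, x = u := by
      refine fun x hx => (hw.iff_of_arc (P := (· = u)) ?_ hx huS).2 rfl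
      rintro x hx y hy (hxy | ⟨rfl, rfl⟩)
      · simp [(hA x y hxy).1, (hA x y hxy).2]
      · rcases hpq with ⟨rfl, rfl⟩ | ⟨rfl, rfl⟩
        exacts [absurd hy haS, absurd hx haS]
    rw [Finset.eq_singleton_iff_unique_mem.2 ⟨huS, hSu⟩]
    exact TwinDH.singleton_restrict (by grind)

end HereditaryTwinDH

lemma TwinDH.hereditaryTwinDH {V : Finset ℕ} {A : ℕ → ℕ → Prop} (h : TwinDH V A) :
    HereditaryTwinDH V A := by
  induction h with
  | single v => exact .single v
  | union hd h₁ h₂ ih₁ ih₂ => exact .union hd h₁ h₂ ih₁ ih₂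
  | twin v u auv avu hv hu h ih => exact .twin h ih hv hu
  | pendPlus a u ha hu h ih =>
    exact .pendant h ih ha hu (Or.inl ⟨rfl, rfl⟩) (TwinDH.pendPlus a u)
  | pendMinus a u ha hu h ih =>
    exact .pendant h ih ha hu (Or.inr ⟨rfl, rfl⟩) (TwinDH.pendMinus a u)

theorem stmt_3 (V : Finset ℕ) (A : ℕ → ℕ → Prop) (h : TwinDH V A)
    (S : Finset ℕ) (hS : S ⊆ V) (hw : WeaklyConn A S) :
    TwinDH S (restrict A S) :=
  h.hereditaryTwinDH S hS hw
end

section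
/- If G is a twin-distance-hereditary digraph, then its underlying undirected graph un(G) is a distance-hereditary graph. -/
def underlying (A : ℕ → ℕ → Prop) : ℕ → ℕ → Prop :=
  fun x y => x ≠ y ∧ (A x y ∨ A y x)

theorem TwinDH.mem_and_ne_of_arc {V : Finset ℕ} {A : ℕ → ℕ → Prop} (h : TwinDH V A) {x y : ℕ}
    (hxy : A x y) : x ∈ V ∧ y ∈ V ∧ x ≠ y := by
  induction h generalizing x y with
  | single _ => exact hxy.elim
  | union _ _ _ ih₁ ih₂ => rcases hxy with hxy | hxy <;> grind
  | twin v u _ _ hv hu _ ih =>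
    rcases hxy with hxy | ⟨rfl, rfl, -⟩ | ⟨rfl, rfl, -⟩ | ⟨rfl, hxy⟩ | ⟨rfl, hxy⟩ <;> grind
  | pendPlus a u ha hu _ ih => rcases hxy with hxy | ⟨rfl, rfl⟩ <;> grind
  | pendMinus a u ha hu _ ih => rcases hxy with hxy | ⟨rfl, rfl⟩ <;> grind

theorem UDH.mem_of_adj {V : Finset ℕ} {E : ℕ → ℕ → Prop} (h : UDH V E) {x y : ℕ}
    (hxy : E x y) : x ∈ V ∧ y ∈ V := by
  induction h generalizing x y with
  | single _ => exact hxy.elim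
  | pendant a u ha hu _ ih => rcases hxy with hxy | ⟨rfl, rfl⟩ | ⟨rfl, rfl⟩ <;> grind
  | falseTwin v u hv hu _ ih => rcases hxy with hxy | ⟨rfl, hxy⟩ | ⟨rfl, hxy⟩ <;> grind
  | trueTwin v u hv hu _ ih =>
    rcases hxy with hxy | ⟨rfl, hxy⟩ | ⟨rfl, hxy⟩ | ⟨rfl, rfl⟩ | ⟨rfl, rfl⟩ <;> grind

theorem UDH.insert_isolated {V : Finset ℕ} {E : ℕ → ℕ → Prop} (h : UDH V E) {w : ℕ}
    (hw : w ∉ V) : UDH (insert w V) E := by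
  induction h with
  | single v => simpa using UDH.falseTwin v w (Finset.mem_singleton_self v) hw (UDH.single v)
  | pendant a u ha hu _ ih =>
    rw [Finset.insert_comm]
    exact .pendant a u (Finset.mem_insert_of_mem ha) (by grind) (ih (by grind))
  | falseTwin v u hv hu _ ih =>
    rw [Finset.insert_comm]
    exact .falseTwin v u (Finset.mem_insert_of_mem hv) (by grind) (ih (by grind))
  | trueTwin v u hv hu _ ih =>
    rw [Finset.insert_comm]
    exact .trueTwin v u (Finset.mem_insert_of_mem hv) (by grind) (ih (by grind))

theorem UDH.union {V₁ V₂ : Finset ℕ} {E₁ E₂ : ℕ → ℕ → Prop} (hV : Disjoint V₁ V₂)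
    (h₁ : UDH V₁ E₁) (h₂ : UDH V₂ E₂) : UDH (V₁ ∪ V₂) (fun x y => E₁ x y ∨ E₂ x y) := by
  have hE₁ {x y : ℕ} (hxy : E₁ x y) : x ∈ V₁ ∧ y ∈ V₁ := h₁.mem_of_adj hxy
  induction h₂ with
  | single v =>
    simpa [Finset.union_singleton] using
      h₁.insert_isolated (Finset.disjoint_singleton_right.mp hV)
  | pendant a u ha hu _ ih =>
    rw [Finset.union_insert]
    convert UDH.pendant a u (Finset.mem_union_right _ ha) (by grind) (ih (by grind)) using 1
    grind
  | falseTwin v u hv hu _ ih =>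
    have hv₁ : v ∉ V₁ := Finset.disjoint_right.mp hV (Finset.mem_insert_of_mem hv)
    rw [Finset.union_insert]
    convert UDH.falseTwin v u (Finset.mem_union_right _ hv) (by grind) (ih (by grind)) using 1
    grind
  | trueTwin v u hv hu _ ih =>
    have hv₁ : v ∉ V₁ := Finset.disjoint_right.mp hV (Finset.mem_insert_of_mem hv)
    rw [Finset.union_insert]
    convert UDH.trueTwin v u (Finset.mem_union_right _ hv) (by grind) (ih (by grind)) using 1
    grind

theorem underlying_or (A₁ A₂ : ℕ → ℕ → Prop) :
    underlying (fun x y => A₁ x y ∨ A₂ x y) =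
      fun x y => underlying A₁ x y ∨ underlying A₂ x y := by
  funext x y
  simp only [underlying, eq_iff_iff]
  tauto

theorem underlying_addArc (A : ℕ → ℕ → Prop) {a b : ℕ} (hab : a ≠ b) :
    underlying (fun x y => A x y ∨ (x = a ∧ y = b)) =
      fun x y => underlying A x y ∨ (x = a ∧ y = b) ∨ (x = b ∧ y = a) := by
  funext x y
  simp only [underlying, eq_iff_iff]
  grind

theorem underlying_twinArc_of_adj {V : Finset ℕ} {A : ℕ → ℕ → Prop} {v u : ℕ} {auv avu : Prop}
    (hA : ∀ {x y}, A x y → x ∈ V ∧ y ∈ V ∧ x ≠ y) (hv : v ∈ V) (hu : u ∉ V)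
    (hadj : auv ∨ avu) :
    underlying (twinArc A v u auv avu) = fun x y => underlying A x y ∨
      (x = u ∧ underlying A v y) ∨ (y = u ∧ underlying A x v) ∨ (x = u ∧ y = v) ∨
        (x = v ∧ y = u) := by
  funext x y
  simp only [underlying, twinArc, eq_iff_iff]
  grind

theorem underlying_twinArc_of_not_adj {V : Finset ℕ} {A : ℕ → ℕ → Prop} {v u : ℕ}
    {auv avu : Prop} (hA : ∀ {x y}, A x y → x ∈ V ∧ y ∈ V ∧ x ≠ y) (hu : u ∉ V)
    (hauv : ¬auv) (havu : ¬avu) :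
    underlying (twinArc A v u auv avu) = fun x y => underlying A x y ∨
      (x = u ∧ underlying A v y) ∨ (y = u ∧ underlying A x v) := by
  funext x y
  simp only [underlying, twinArc, eq_iff_iff]
  grind

theorem stmt_4 (V : Finset ℕ) (A : ℕ → ℕ → Prop) (h : TwinDH V A) :
    UDH V (fun x y => x ≠ y ∧ (A x y ∨ A y x)) := by
  change UDH V (underlying A)
  induction h with
  | single v =>
    convert UDH.single v using 1
    funext x y
    simp [underlying]
  | union hV _ _ ih₁ ih₂ =>
    rw [underlying_or]
    exact ih₁.union hV ih₂
  | twin v u auv avu hv hu h ih =>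
    by_cases hadj : auv ∨ avu
    · rw [underlying_twinArc_of_adj h.mem_and_ne_of_arc hv hu hadj]
      exact ih.trueTwin v u hv hu
    · rw [not_or] at hadj
      rw [underlying_twinArc_of_not_adj h.mem_and_ne_of_arc hu hadj.1 hadj.2]
      exact ih.falseTwin v u hv hu
  | pendPlus a u ha hu _ ih =>
    rw [underlying_addArc _ (ne_of_mem_of_not_mem ha hu).symm]
    exact ih.pendant a u ha hu
  | pendMinus a u ha hu _ ih =>
    rw [underlying_addArc _ (ne_of_mem_of_not_mem ha hu)]
    convert ih.pendant a u ha hu using 4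
    exact or_comm
end

section
/- Every twin-distance-hereditary digraph G is distance-hereditary: for every induced subdigraph H of G and every two vertices u, v of H such that v is reachable from u in H, the directed distance from u to v in H equals the directed distance from u to v in G. -/
/-!
Two properties are preserved by every construction step. `DistHereditary`: a walk of length `n`
between two vertices that are connected inside an induced subdigraph can be replaced by one of
length at most `n` inside it. `DigonOnCycles`: every vertex on a closed walk of an induced
subdigraph lies on a digon of it. Walks cannot cross between the parts of a disjoint union, and
a pendant vertex can only be the first or last vertex of a walk. For a twin `u` of `v`,
collapsing `u` onto `v` maps walks to walks that are no longer, and walks of positive length lift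
back; the only walks lost are those between `u` and `v`, and when `u v` is not an arc the digon
property turns a walk from `u` to `v` inside the subdigraph into a path `u → z → v` there.
-/

section Walks

variable {R R' : ℕ → ℕ → Prop}

theorem walkLen_mono (h : ∀ a b, R a b → R' a b) :
    ∀ {n x y}, walkLen R n x y → walkLen R' n x y
  | 0, _, _, hw => hw
  | _ + 1, _, _, ⟨w, hxw, hw⟩ => ⟨w, h _ _ hxw, walkLen_mono h hw⟩

theorem walkLen_succ_right :
    ∀ {n x z}, walkLen R (n + 1) x z ↔ ∃ y, walkLen R n x y ∧ R y z
  | 0, x, z => by simp [walkLen]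
  | n + 1, x, z => by
    simp only [walkLen] at *
    constructor
    · rintro ⟨w, hxw, hw⟩
      obtain ⟨y, hwy, hyz⟩ := walkLen_succ_right.1 hw
      exact ⟨y, ⟨w, hxw, hwy⟩, hyz⟩
    · rintro ⟨y, ⟨w, hxw, hwy⟩, hyz⟩
      exact ⟨w, hxw, walkLen_succ_right.2 ⟨y, hwy, hyz⟩⟩

theorem walkLen_flip : ∀ {n x y}, walkLen (flip R) n x y ↔ walkLen R n y x
  | 0, x, y => eq_comm
  | n + 1, x, y => by
    rw [walkLen_succ_right]
    simp only [walkLen, flip, walkLen_flip]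
    exact exists_congr fun _ => and_comm

theorem two_le_of_walkLen {n x y : ℕ} (h : walkLen R n x y) (hxy : x ≠ y) (hR : ¬R x y) :
    2 ≤ n := by
  match n, h with
  | 0, h => exact absurd h hxy
  | 1, ⟨w, hxw, hw⟩ => exact absurd (hw ▸ hxw) hR
  | _ + 2, _ => omega

theorem walkLen_of_closed {T : Set ℕ} (hT : ∀ a b, a ∈ T → R a b → R' a b ∧ b ∈ T) :
    ∀ {n x y}, x ∈ T → walkLen R n x y → walkLen R' n x y ∧ y ∈ T
  | 0, _, _, hx, hw => ⟨hw, hw ▸ hx⟩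
  | _ + 1, _, _, hx, ⟨w, hxw, hw⟩ =>
    have hw' := hT _ _ hx hxw
    have ih := walkLen_of_closed hT hw'.2 hw
    ⟨⟨w, hw'.1, ih.1⟩, ih.2⟩

theorem walkLen_map {f : ℕ → ℕ} (hf : ∀ a b, R a b → f a = f b ∨ R' (f a) (f b)) :
    ∀ {n x y}, walkLen R n x y →
      (∃ m, 0 < m ∧ m ≤ n ∧ walkLen R' m (f x) (f y)) ∨
        (f x = f y ∧ walkLen (fun a b => R a b ∧ f a = f b) n x y)
  | 0, _, _, hw => Or.inr ⟨congrArg f hw, hw⟩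
  | n + 1, x, y, ⟨w, hxw, hw⟩ => by
    rcases walkLen_map hf hw with ⟨m, hm, hmn, hmw⟩ | ⟨hwy, hcw⟩ <;>
      rcases hf _ _ hxw with hfxw | hfxw
    · exact Or.inl ⟨m, hm, by omega, hfxw ▸ hmw⟩
    · exact Or.inl ⟨m + 1, m.succ_pos, by omega, ⟨_, hfxw, hmw⟩⟩
    · exact Or.inr ⟨hfxw.trans hwy, ⟨w, ⟨hxw, hfxw⟩, hcw⟩⟩
    · exact Or.inl ⟨1, one_pos, by omega, ⟨_, hfxw, hwy⟩⟩

theorem walkLen_map_le {f : ℕ → ℕ} (hf : ∀ a b, R a b → f a = f b ∨ R' (f a) (f b))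
    {n x y : ℕ} (h : walkLen R n x y) : ∃ m ≤ n, walkLen R' m (f x) (f y) := by
  rcases walkLen_map hf h with ⟨m, -, hmn, hmw⟩ | ⟨hxy, -⟩
  · exact ⟨m, hmn, hmw⟩
  · exact ⟨0, n.zero_le, hxy⟩

end Walks

section Restrict

variable {R R' : ℕ → ℕ → Prop} {S : Finset ℕ}

theorem restrict_flip : restrict (flip R) S = flip (restrict R S) := by
  funext x y
  simp only [restrict, flip, and_comm]

theorem mem_of_walkLen_restrict :
    ∀ {n x y}, walkLen (restrict R S) n x y → x ≠ y → x ∈ S ∧ y ∈ S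
  | 0, _, _, hw, hxy => absurd hw hxy
  | _ + 1, _, y, ⟨w, hxw, hw⟩, _ => by
    refine ⟨hxw.2.1, ?_⟩
    rcases eq_or_ne w y with rfl | hwy
    · exact hxw.2.2
    · exact (mem_of_walkLen_restrict hw hwy).2

theorem walkLen_restrict_lift {f : ℕ → ℕ} (hf : ∀ a b, R' (f a) (f b) → R a b) :
    ∀ {m x y}, x ∈ S → y ∈ S →
      walkLen (restrict R' (S.image f)) (m + 1) (f x) (f y) → walkLen (restrict R S) (m + 1) x y
  | 0, x, y, hx, hy, ⟨_, hxy, rfl⟩ => ⟨y, ⟨hf _ _ hxy.1, hx, hy⟩, rfl⟩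
  | _ + 1, x, y, hx, hy, ⟨_, hxw, hw⟩ => by
    obtain ⟨w, hwS, rfl⟩ := Finset.mem_image.1 hxw.2.2
    exact ⟨w, ⟨hf _ _ hxw.1, hx, hwS⟩, walkLen_restrict_lift hf hwS hy hw⟩

end Restrict

def DistHereditary (A : ℕ → ℕ → Prop) : Prop :=
  ∀ (S : Finset ℕ) (x y n k : ℕ), walkLen A n x y → walkLen (restrict A S) k x y →
    ∃ m ≤ n, walkLen (restrict A S) m x y

def DigonOnCycles (A : ℕ → ℕ → Prop) : Prop :=
  ∀ (S : Finset ℕ) (w k : ℕ), 0 < k → walkLen (restrict A S) k w w →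
    ∃ z, restrict A S w z ∧ restrict A S z w

section Hereditary

variable {A B : ℕ → ℕ → Prop}

theorem distHereditary_bot : DistHereditary fun _ _ => False
  | _, _, _, 0, _, hn, _ => ⟨0, le_rfl, hn⟩

theorem digonOnCycles_bot : DigonOnCycles fun _ _ => False
  | _, _, _ + 1, _, ⟨_, hw, _⟩ => hw.1.elim

theorem DistHereditary.flip (hA : DistHereditary A) : DistHereditary (flip A) := by
  intro S x y n k hn hk
  simp only [restrict_flip, walkLen_flip] at hn hk ⊢
  exact hA S y x n k hn hk

theorem DigonOnCycles.flip (hA : DigonOnCycles A) : DigonOnCycles (flip A) := by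
  intro S w k hk hw
  rw [restrict_flip, walkLen_flip] at hw
  obtain ⟨z, hwz, hzw⟩ := hA S w k hk hw
  exact ⟨z, restrict_flip (R := A) ▸ hzw, restrict_flip (R := A) ▸ hwz⟩

theorem DigonOnCycles.walkLen_two_of_twins {S : Finset ℕ} {x y k : ℕ} (hA : DigonOnCycles A)
    (hirr : ∀ z, ¬A z z) (htwin : ∀ z, z ≠ x → z ≠ y → (A x z ↔ A y z)) (hxy : x ≠ y)
    (hxy' : ¬A x y) (hk : walkLen (restrict A S) k x y) : walkLen (restrict A S) 2 x y := by
  match k, hk with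
  | 0, hk => exact absurd hk hxy
  | k + 1, ⟨z₁, hxz₁, hk⟩ =>
    have hz₁x : z₁ ≠ x := by rintro rfl; exact hirr _ hxz₁.1
    have hz₁y : z₁ ≠ y := by rintro rfl; exact hxy' hxz₁.1
    have hy : y ∈ S := (mem_of_walkLen_restrict hk hz₁y).2
    obtain ⟨z, hyz, hzy⟩ := hA S y (k + 1) k.succ_pos
      ⟨z₁, ⟨(htwin z₁ hz₁x hz₁y).1 hxz₁.1, hy, hxz₁.2.2⟩, hk⟩
    have hzx : z ≠ x := by rintro rfl; exact hxy' hzy.1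
    have hzy' : z ≠ y := by rintro rfl; exact hirr _ hyz.1
    exact ⟨z, ⟨(htwin z hzx hzy').2 hyz.1, hxz₁.2.1, hyz.2.2⟩, y, hzy, rfl⟩

section Closed

variable {T : Set ℕ} (hBA : ∀ a b, B a b → A a b) (hT : ∀ a b, a ∈ T → A a b → B a b ∧ b ∈ T)
include hBA hT

theorem DistHereditary.of_closed (hB : DistHereditary B) {S : Finset ℕ} {x y n k : ℕ}
    (hx : x ∈ T) (hn : walkLen A n x y) (hk : walkLen (restrict A S) k x y) :
    ∃ m ≤ n, walkLen (restrict A S) m x y := by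
  have hTS : ∀ a b, a ∈ T → restrict A S a b → restrict B S a b ∧ b ∈ T :=
    fun a b ha hab => ⟨⟨(hT a b ha hab.1).1, hab.2⟩, (hT a b ha hab.1).2⟩
  obtain ⟨m, hm, hmw⟩ :=
    hB S x y n k (walkLen_of_closed hT hx hn).1 (walkLen_of_closed hTS hx hk).1
  exact ⟨m, hm, walkLen_mono (fun a b hab => ⟨hBA a b hab.1, hab.2⟩) hmw⟩

theorem DigonOnCycles.of_closed (hB : DigonOnCycles B) {S : Finset ℕ} {w k : ℕ}
    (hw : w ∈ T) (hk : 0 < k) (hkw : walkLen (restrict A S) k w w) :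
    ∃ z, restrict A S w z ∧ restrict A S z w := by
  have hTS : ∀ a b, a ∈ T → restrict A S a b → restrict B S a b ∧ b ∈ T :=
    fun a b ha hab => ⟨⟨(hT a b ha hab.1).1, hab.2⟩, (hT a b ha hab.1).2⟩
  obtain ⟨z, hwz, hzw⟩ := hB S w k hk (walkLen_of_closed hTS hw hkw).1
  exact ⟨z, ⟨hBA _ _ hwz.1, hwz.2⟩, ⟨hBA _ _ hzw.1, hzw.2⟩⟩

end Closed

end Hereditary

section Union

variable {V₁ V₂ : Finset ℕ} {A₁ A₂ : ℕ → ℕ → Prop} (hd : Disjoint V₁ V₂)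
  (h₁ : ∀ a b, A₁ a b → a ∈ V₁ ∧ b ∈ V₁) (h₂ : ∀ a b, A₂ a b → a ∈ V₂ ∧ b ∈ V₂)
include hd h₁ h₂

theorem union_arc_left (a b : ℕ) (ha : a ∈ (V₁ : Set ℕ)) (hab : A₁ a b ∨ A₂ a b) :
    A₁ a b ∧ b ∈ (V₁ : Set ℕ) := by
  have hab : A₁ a b := hab.resolve_right fun h => Finset.disjoint_left.1 hd ha (h₂ a b h).1
  exact ⟨hab, (h₁ a b hab).2⟩

theorem union_arc_right (a b : ℕ) (ha : a ∈ (V₂ : Set ℕ)) (hab : A₁ a b ∨ A₂ a b) :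
    A₂ a b ∧ b ∈ (V₂ : Set ℕ) :=
  union_arc_left hd.symm h₂ h₁ a b ha hab.symm

theorem DistHereditary.union (hA₁ : DistHereditary A₁) (hA₂ : DistHereditary A₂) :
    DistHereditary fun x y => A₁ x y ∨ A₂ x y := by
  intro S x y n k hn hk
  rcases eq_or_ne x y with rfl | hxy
  · exact ⟨0, n.zero_le, rfl⟩
  match n, hn with
  | 0, hn => exact absurd hn hxy
  | _ + 1, hn@⟨_, hxw, _⟩ =>
    rcases hxw with h | h
    · exact hA₁.of_closed (fun _ _ => Or.inl) (union_arc_left hd h₁ h₂) (h₁ _ _ h).1 hn hk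
    · exact hA₂.of_closed (fun _ _ => Or.inr) (union_arc_right hd h₁ h₂) (h₂ _ _ h).1 hn hk

theorem DigonOnCycles.union (hA₁ : DigonOnCycles A₁) (hA₂ : DigonOnCycles A₂) :
    DigonOnCycles fun x y => A₁ x y ∨ A₂ x y
  | _, _, k + 1, hk, hkw@⟨_, hww', _⟩ => by
    rcases hww'.1 with h | h
    · exact hA₁.of_closed (fun _ _ => Or.inl) (union_arc_left hd h₁ h₂) (h₁ _ _ h).1 hk hkw
    · exact hA₂.of_closed (fun _ _ => Or.inr) (union_arc_right hd h₁ h₂) (h₂ _ _ h).1 hk hkw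

end Union

section Pendant

variable {A : ℕ → ℕ → Prop} {a u : ℕ}

theorem pendMinus_eq_flip :
    (fun x y => A x y ∨ (x = a ∧ y = u)) = flip fun x y => flip A x y ∨ (x = u ∧ y = a) := by
  funext x y
  simp only [flip, and_comm]

variable (hu : ∀ z, ¬A u z ∧ ¬A z u)
include hu

theorem pendPlus_arc (b c : ℕ) (hb : b ∈ {z | z ≠ u}) (hbc : A b c ∨ (b = u ∧ c = a)) :
    A b c ∧ c ∈ {z | z ≠ u} := by
  have hbc : A b c := hbc.resolve_right fun h => hb h.1
  exact ⟨hbc, fun hc => (hu b).2 (hc ▸ hbc)⟩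

variable (hau : a ≠ u)
include hau

theorem DistHereditary.pendPlus (hA : DistHereditary A) :
    DistHereditary fun x y => A x y ∨ (x = u ∧ y = a) := by
  intro S x y n k hn hk
  rcases eq_or_ne x y with rfl | hxy
  · exact ⟨0, n.zero_le, rfl⟩
  rcases eq_or_ne x u with rfl | hxu
  · match n, k, hn, hk with
    | 0, _, hn, _ => exact absurd hn hxy
    | _, 0, _, hk => exact absurd hk hxy
    | n + 1, k + 1, ⟨w, hxw, hn⟩, ⟨w', hxw', hk⟩ =>
      obtain rfl : w = a := (hxw.resolve_left (hu w).1).2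
      obtain rfl : w' = w := (hxw'.1.resolve_left (hu w').1).2
      obtain ⟨m, hm, hmw⟩ := hA.of_closed (fun _ _ => Or.inl) (pendPlus_arc hu) hau hn hk
      exact ⟨m + 1, by omega, ⟨w', hxw', hmw⟩⟩
  · exact hA.of_closed (fun _ _ => Or.inl) (pendPlus_arc hu) hxu hn hk

theorem DigonOnCycles.pendPlus (hA : DigonOnCycles A) :
    DigonOnCycles fun x y => A x y ∨ (x = u ∧ y = a) := by
  intro S w k hk hkw
  rcases eq_or_ne w u with rfl | hwu
  · match k, hkw with
    | _ + 1, ⟨w', hww', hkw⟩ =>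
      obtain rfl : w' = a := (hww'.1.resolve_left (hu w').1).2
      exact absurd rfl
        (walkLen_of_closed (pendPlus_arc hu) hau (walkLen_mono (fun _ _ h => h.1) hkw)).2
  · exact hA.of_closed (fun _ _ => Or.inl) (pendPlus_arc hu) hwu hk hkw

theorem DistHereditary.pendMinus (hA : DistHereditary A) :
    DistHereditary fun x y => A x y ∨ (x = a ∧ y = u) :=
  pendMinus_eq_flip ▸ (hA.flip.pendPlus (fun z => (hu z).symm) hau).flip

theorem DigonOnCycles.pendMinus (hA : DigonOnCycles A) :
    DigonOnCycles fun x y => A x y ∨ (x = a ∧ y = u) :=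
  pendMinus_eq_flip ▸ (hA.flip.pendPlus (fun z => (hu z).symm) hau).flip

end Pendant

def collapse (u v z : ℕ) : ℕ := if z = u then v else z

theorem collapse_eq_collapse {u v a b : ℕ} (hab : a ≠ b) (h : collapse u v a = collapse u v b) :
    a = u ∧ b = v ∨ a = v ∧ b = u := by
  unfold collapse at h
  split_ifs at h <;> omega

section Twin

variable {A : ℕ → ℕ → Prop} {u v : ℕ} {auv avu : Prop} (hu : ∀ z, ¬A u z ∧ ¬A z u)
include hu

theorem twinArc_collapse {a b : ℕ} (h : twinArc A v u auv avu a b) :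
    collapse u v a = collapse u v b ∨ A (collapse u v a) (collapse u v b) := by
  unfold twinArc at h
  unfold collapse
  split_ifs <;> aesop

theorem restrict_twinArc_collapse {S : Finset ℕ} {a b : ℕ}
    (h : restrict (twinArc A v u auv avu) S a b) : collapse u v a = collapse u v b ∨
      restrict A (S.image (collapse u v)) (collapse u v a) (collapse u v b) :=
  (twinArc_collapse hu h.1).imp_right fun h' =>
    ⟨h', Finset.mem_image_of_mem _ h.2.1, Finset.mem_image_of_mem _ h.2.2⟩

theorem twinArc_of_collapse (hv : ¬A v v) {a b : ℕ} (h : A (collapse u v a) (collapse u v b)) :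
    twinArc A v u auv avu a b := by
  unfold twinArc
  unfold collapse at h
  split_ifs at h <;> aesop

theorem twinArc_out_iff {z : ℕ} (hzu : z ≠ u) (hzv : z ≠ v) :
    twinArc A v u auv avu u z ↔ twinArc A v u auv avu v z := by
  unfold twinArc
  aesop

theorem twinArc_irrefl (hirr : ∀ z, ¬A z z) (huv : u ≠ v) (a : ℕ) :
    ¬twinArc A v u auv avu a a := by
  unfold twinArc
  aesop

variable (hirr : ∀ z, ¬A z z) (huv : u ≠ v)
include hirr huv

theorem DigonOnCycles.twin (hA : DigonOnCycles A) :
    DigonOnCycles (twinArc A v u auv avu) := by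
  intro S w k hk hkw
  rcases walkLen_map (fun _ _ h => restrict_twinArc_collapse hu h) hkw with
    ⟨m, hm, -, hmw⟩ | ⟨-, hc⟩
  · obtain ⟨_, hwz, hzw⟩ := hA _ _ m hm hmw
    obtain ⟨z, hz, rfl⟩ := Finset.mem_image.1 hwz.2.2
    have hw : w ∈ S := by
      match k, hkw with
      | _ + 1, ⟨_, hww', _⟩ => exact hww'.2.1
    exact ⟨z, ⟨twinArc_of_collapse hu (hirr v) hwz.1, hw, hz⟩,
      ⟨twinArc_of_collapse hu (hirr v) hzw.1, hz, hw⟩⟩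
  -- every arc of `hc` joins `u` and `v`, so it starts `w → w' → w`
  · match k, hc with
    | 1, ⟨_, ⟨hww, _⟩, rfl⟩ => exact absurd hww.1 (twinArc_irrefl hu hirr huv w)
    | _ + 2, ⟨w', ⟨hww', hc₁⟩, w'', ⟨hw'w'', hc₂⟩, _⟩ =>
      have hww'_ne : w ≠ w' := by rintro rfl; exact twinArc_irrefl hu hirr huv w hww'.1
      have hw'w''_ne : w' ≠ w'' := by rintro rfl; exact twinArc_irrefl hu hirr huv w' hw'w''.1
      obtain rfl : w'' = w := by
        unfold collapse at hc₁ hc₂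
        split_ifs at hc₁ hc₂ <;> omega
      exact ⟨w', hww', hw'w''⟩

theorem DistHereditary.twin (hA : DistHereditary A) (hA' : DigonOnCycles (twinArc A v u auv avu)) :
    DistHereditary (twinArc A v u auv avu) := by
  intro S x y n k hn hk
  rcases eq_or_ne x y with rfl | hxy
  · exact ⟨0, n.zero_le, rfl⟩
  obtain ⟨hx, hy⟩ := mem_of_walkLen_restrict hk hxy
  obtain ⟨n₀, hn₀, hn₀w⟩ := walkLen_map_le (fun _ _ h => twinArc_collapse hu h) hn
  obtain ⟨k₀, -, hk₀w⟩ := walkLen_map_le (fun _ _ h => restrict_twinArc_collapse hu h) hk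
  obtain ⟨m, hm, hmw⟩ := hA _ _ _ n₀ k₀ hn₀w hk₀w
  cases m with
  | succ m =>
    exact ⟨m + 1, hm.trans hn₀,
      walkLen_restrict_lift (R' := A) (f := collapse u v)
        (fun _ _ h => twinArc_of_collapse hu (hirr v) h) hx hy hmw⟩
  | zero =>
    -- `x` and `y` are the twins `u` and `v`
    have htwin : ∀ z, z ≠ x → z ≠ y →
        (twinArc A v u auv avu x z ↔ twinArc A v u auv avu y z) := by
      rcases collapse_eq_collapse hxy hmw with ⟨rfl, rfl⟩ | ⟨rfl, rfl⟩
      · exact fun z hzx hzy => twinArc_out_iff hu hzx hzy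
      · exact fun z hzx hzy => (twinArc_out_iff hu hzy hzx).symm
    by_cases hxy' : twinArc A v u auv avu x y
    · exact ⟨1, Nat.pos_of_ne_zero (by rintro rfl; exact hxy hn), ⟨y, ⟨hxy', hx, hy⟩, rfl⟩⟩
    · exact ⟨2, two_le_of_walkLen hn hxy hxy',
        hA'.walkLen_two_of_twins (twinArc_irrefl hu hirr huv) htwin hxy hxy' hk⟩

end Twin

section TwinDH

variable {V : Finset ℕ} {A : ℕ → ℕ → Prop}

theorem TwinDH.mem_of_arc (h : TwinDH V A) {a b : ℕ} (hab : A a b) : a ∈ V ∧ b ∈ V := by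
  induction h generalizing a b with
  | single => exact hab.elim
  | union _ _ _ ih₁ ih₂ =>
    rcases hab with hab | hab
    · exact (ih₁ hab).imp (Finset.mem_union_left _) (Finset.mem_union_left _)
    · exact (ih₂ hab).imp (Finset.mem_union_right _) (Finset.mem_union_right _)
  | twin _ _ _ _ hv _ _ ih =>
    rcases hab with hab | ⟨rfl, rfl, -⟩ | ⟨rfl, rfl, -⟩ | ⟨rfl, hab⟩ | ⟨rfl, hab⟩
    · exact (ih hab).imp Finset.mem_insert_of_mem Finset.mem_insert_of_mem
    · exact ⟨Finset.mem_insert_self _ _, Finset.mem_insert_of_mem hv⟩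
    · exact ⟨Finset.mem_insert_of_mem hv, Finset.mem_insert_self _ _⟩
    · exact ⟨Finset.mem_insert_self _ _, Finset.mem_insert_of_mem (ih hab).2⟩
    · exact ⟨Finset.mem_insert_of_mem (ih hab).1, Finset.mem_insert_self _ _⟩
  | pendPlus _ _ ha _ _ ih =>
    rcases hab with hab | ⟨rfl, rfl⟩
    · exact (ih hab).imp Finset.mem_insert_of_mem Finset.mem_insert_of_mem
    · exact ⟨Finset.mem_insert_self _ _, Finset.mem_insert_of_mem ha⟩
  | pendMinus _ _ ha _ _ ih =>
    rcases hab with hab | ⟨rfl, rfl⟩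
    · exact (ih hab).imp Finset.mem_insert_of_mem Finset.mem_insert_of_mem
    · exact ⟨Finset.mem_insert_of_mem ha, Finset.mem_insert_self _ _⟩

theorem TwinDH.isolated (h : TwinDH V A) {u : ℕ} (hu : u ∉ V) (z : ℕ) : ¬A u z ∧ ¬A z u :=
  ⟨fun h' => hu (h.mem_of_arc h').1, fun h' => hu (h.mem_of_arc h').2⟩

theorem TwinDH.irrefl_s7 (h : TwinDH V A) (a : ℕ) : ¬A a a := by
  induction h generalizing a with
  | single => exact id
  | union _ _ _ ih₁ ih₂ => exact fun h' => h'.elim (ih₁ a) (ih₂ a)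
  | twin v u _ _ hv hu h ih =>
    exact twinArc_irrefl (h.isolated hu) ih (by rintro rfl; exact hu hv) a
  | pendPlus _ _ ha hu _ ih | pendMinus _ _ ha hu _ ih =>
    rintro (h' | ⟨rfl, rfl⟩)
    exacts [ih a h', hu ha]

theorem TwinDH.distHereditary_and_digonOnCycles (h : TwinDH V A) :
    DistHereditary A ∧ DigonOnCycles A := by
  induction h with
  | single => exact ⟨distHereditary_bot, digonOnCycles_bot⟩
  | union hd h₁ h₂ ih₁ ih₂ =>
    exact ⟨ih₁.1.union hd (fun _ _ => h₁.mem_of_arc) (fun _ _ => h₂.mem_of_arc) ih₂.1,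
      ih₁.2.union hd (fun _ _ => h₁.mem_of_arc) (fun _ _ => h₂.mem_of_arc) ih₂.2⟩
  | twin v u auv avu hv hu h ih =>
    have huv : u ≠ v := by rintro rfl; exact hu hv
    have hdigon := ih.2.twin (auv := auv) (avu := avu) (h.isolated hu) h.irrefl_s7 huv
    exact ⟨ih.1.twin (h.isolated hu) h.irrefl_s7 huv hdigon, hdigon⟩
  | pendPlus a u ha hu h ih =>
    have hau : a ≠ u := by rintro rfl; exact hu ha
    exact ⟨ih.1.pendPlus (h.isolated hu) hau, ih.2.pendPlus (h.isolated hu) hau⟩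
  | pendMinus a u ha hu h ih =>
    have hau : a ≠ u := by rintro rfl; exact hu ha
    exact ⟨ih.1.pendMinus (h.isolated hu) hau, ih.2.pendMinus (h.isolated hu) hau⟩

end TwinDH

theorem DistHereditary.ddist_restrict {A : ℕ → ℕ → Prop} (hA : DistHereditary A) {S : Finset ℕ}
    {u v : ℕ} (h : Reach (restrict A S) u v) : ddist (restrict A S) u v = ddist A u v := by
  have hsub : ∀ a b, restrict A S a b → A a b := fun _ _ hab => hab.1
  obtain ⟨k, hk⟩ := h
  have hS : walkLen (restrict A S) (ddist (restrict A S) u v) u v :=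
    Nat.sInf_mem (s := {n | walkLen (restrict A S) n u v}) ⟨k, hk⟩
  have hV : walkLen A (ddist A u v) u v :=
    Nat.sInf_mem (s := {n | walkLen A n u v}) ⟨k, walkLen_mono hsub hk⟩
  obtain ⟨m, hm, hmw⟩ := hA S u v _ k hV hk
  exact le_antisymm ((Nat.sInf_le (s := {n | walkLen (restrict A S) n u v}) hmw).trans hm)
    (Nat.sInf_le (s := {n | walkLen A n u v}) (walkLen_mono hsub hS))

theorem stmt_7_general (V : Finset ℕ) (A : ℕ → ℕ → Prop) (h : TwinDH V A)
    (S : Finset ℕ) (u v : ℕ) (hreach : Reach (restrict A S) u v) :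
    ddist (restrict A S) u v = ddist A u v :=
  h.distHereditary_and_digonOnCycles.1.ddist_restrict hreach

theorem stmt_7 (V : Finset ℕ) (A : ℕ → ℕ → Prop) (h : TwinDH V A)
    (S : Finset ℕ) (hS : S ⊆ V) (u v : ℕ) (hu : u ∈ S) (hv : v ∈ S)
    (hreach : Reach (restrict A S) u v) :
    ddist (restrict A S) u v = ddist A u v :=
  stmt_7_general V A h S u v hreach
end
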